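/- arXiv:2207.11855 — 4 statements merged into one kernel-verified Lean document; each statement's English description precedes it below -/
import Mathlib

section
/- The function Q : (0,∞) → ℝ defined by Q(x) = √π · x · e^{x²} · erfc(x) is strictly increasing on (0,∞), with Q(x) → 0 as x → 0⁺ and Q(x) → 1 as x → +∞. -/
open Real Filter Set

/-- Gauss error function `erf x = (2/√π) ∫₀ˣ e^{−t²} dt`. -/
noncomputable def erf (x : ℝ) : ℝ := (2 / Real.sqrt π) * ∫ t in (0:ℝ)..x, Real.exp (-t ^ 2)

/-- Complementary error function. -/
noncomputable def erfc (x : ℝ) : ℝ := 1 - erf x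

/-- `Q(x) = √π · x · e^{x²} · erfc(x)`. -/
noncomputable def Qf (x : ℝ) : ℝ := Real.sqrt π * x * Real.exp (x ^ 2) * erfc x

/-!
With the Gaussian tail `E(x) = ∫ₓ^∞ e^{-t²} dt` one has `Q(x) = 2x e^{x²} E(x)` and
`Q'(x) = 2e^{x²} ((2x² + 1) E(x) - x e^{-x²})`. Everything then follows from the two-sided bound
`x e^{-x²} / (2x² + 1) < E(x) < e^{-x²} / (2x)`: the left inequality gives `Q' > 0` and
`Q(x) > 1 - 1/(2x² + 1)`, the right one gives `Q(x) < 1`. Each inequality says that the difference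
of its two sides is positive, which holds because that difference is strictly decreasing with
limit `0` at `+∞`.
-/

open MeasureTheory Topology

lemma pos_of_hasDerivAt_neg_of_tendsto_zero {f f' : ℝ → ℝ} {a : ℝ}
    (hf : ∀ x ∈ Ioi a, HasDerivAt f (f' x) x) (hf' : ∀ x ∈ Ioi a, f' x < 0)
    (hlim : Tendsto f atTop (𝓝 0)) {x : ℝ} (hx : a < x) : 0 < f x := by
  have hanti : StrictAntiOn f (Ioi a) :=
    strictAntiOn_of_hasDerivWithinAt_neg (convex_Ioi a)
      (fun y hy => (hf y hy).continuousAt.continuousWithinAt)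
      (fun y hy => (hf y (interior_subset hy)).hasDerivWithinAt)
      (fun y hy => hf' y (interior_subset hy))
  have hnonneg : 0 ≤ f (x + 1) := by
    refine le_of_tendsto hlim ?_
    filter_upwards [eventually_ge_atTop (x + 1)] with z hz
    exact hanti.antitoneOn (show a < x + 1 by linarith) (show a < z by linarith) hz
  exact hnonneg.trans_lt (hanti hx (show a < x + 1 by linarith) (by linarith))

lemma integrable_exp_neg_sq : Integrable fun t : ℝ => exp (-t ^ 2) := by
  simpa using integrable_exp_neg_mul_sq one_pos

lemma hasDerivAt_exp_neg_sq (x : ℝ) :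
    HasDerivAt (fun t : ℝ => exp (-t ^ 2)) (-2 * x * exp (-x ^ 2)) x :=
  ((hasDerivAt_pow 2 x).neg).exp.congr_deriv (by simp; ring)

lemma tendsto_exp_neg_sq_atTop : Tendsto (fun x : ℝ => exp (-x ^ 2)) atTop (𝓝 0) :=
  tendsto_exp_atBot.comp (tendsto_neg_atTop_atBot.comp (tendsto_pow_atTop two_ne_zero))

noncomputable def gaussianTail (x : ℝ) : ℝ := ∫ t in Ioi x, exp (-t ^ 2)

lemma gaussianTail_eq (x : ℝ) :
    gaussianTail x = √π / 2 - ∫ t in (0:ℝ)..x, exp (-t ^ 2) := by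
  have hhalf : ∫ t in Ioi (0:ℝ), exp (-t ^ 2) = √π / 2 := by
    simpa using integral_gaussian_Ioi 1
  rw [← hhalf, ← intervalIntegral.integral_interval_add_Ioi
    integrable_exp_neg_sq.integrableOn integrable_exp_neg_sq.integrableOn, gaussianTail]
  ring

lemma erfc_eq_gaussianTail (x : ℝ) : erfc x = 2 / √π * gaussianTail x := by
  have hπ : √π ≠ 0 := (sqrt_pos.2 pi_pos).ne'
  rw [erfc, erf, gaussianTail_eq]
  field_simp

lemma Qf_eq_gaussianTail (x : ℝ) : Qf x = 2 * x * exp (x ^ 2) * gaussianTail x := by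
  have hπ : √π ≠ 0 := (sqrt_pos.2 pi_pos).ne'
  rw [Qf, erfc_eq_gaussianTail]
  field_simp

lemma hasDerivAt_gaussianTail (x : ℝ) : HasDerivAt gaussianTail (-exp (-x ^ 2)) x := by
  rw [funext gaussianTail_eq]
  exact ((continuous_exp.comp (continuous_pow 2).neg).integral_hasStrictDerivAt 0 x)
    |>.hasDerivAt.const_sub _

lemma tendsto_gaussianTail_atTop : Tendsto gaussianTail atTop (𝓝 0) :=
  tendsto_integral_Ioi_zero tendsto_id

lemma div_lt_gaussianTail (x : ℝ) : x * exp (-x ^ 2) / (2 * x ^ 2 + 1) < gaussianTail x := by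
  set g := fun y : ℝ => gaussianTail y - y * exp (-y ^ 2) / (2 * y ^ 2 + 1)
  have hg : ∀ y, HasDerivAt g (-(2 * exp (-y ^ 2) / (2 * y ^ 2 + 1) ^ 2)) y := by
    intro y
    have hden : HasDerivAt (fun y : ℝ => 2 * y ^ 2 + 1) (2 * (2 * y)) y := by
      simpa using ((hasDerivAt_pow 2 y).const_mul 2).add_const 1
    refine ((hasDerivAt_gaussianTail y).sub
      (((hasDerivAt_id y).mul (hasDerivAt_exp_neg_sq y)).div hden (by positivity))).congr_deriv ?_
    simp only [id, Pi.mul_apply]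
    field_simp
    ring
  have hlim : Tendsto g atTop (𝓝 0) := by
    refine (sub_zero (0:ℝ)) ▸ tendsto_gaussianTail_atTop.sub (squeeze_zero' ?_ ?_
      tendsto_exp_neg_sq_atTop)
    · filter_upwards [eventually_ge_atTop 0] with y hy
      positivity
    · filter_upwards [eventually_ge_atTop 0] with y hy
      rw [div_le_iff₀ (by positivity)]
      nlinarith [exp_pos (-y ^ 2), sq_nonneg (y - 1)]
  have := pos_of_hasDerivAt_neg_of_tendsto_zero (a := x - 1) (fun y _ => hg y)
    (fun y _ => neg_neg_of_pos (by positivity)) hlim (by linarith)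
  exact sub_pos.1 this

lemma gaussianTail_lt_div {x : ℝ} (hx : 0 < x) : gaussianTail x < exp (-x ^ 2) / (2 * x) := by
  set g := fun y : ℝ => exp (-y ^ 2) / (2 * y) - gaussianTail y
  have hg : ∀ y ∈ Ioi (0:ℝ), HasDerivAt g (-(exp (-y ^ 2) / (2 * y ^ 2))) y := by
    rintro y (hy : 0 < y)
    refine (((hasDerivAt_exp_neg_sq y).div ((hasDerivAt_id y).const_mul 2)
      (by simpa using hy.ne')).sub (hasDerivAt_gaussianTail y)).congr_deriv ?_
    simp only [id]
    field_simp
    ring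
  have hlim : Tendsto g atTop (𝓝 0) := by
    refine (sub_zero (0:ℝ)) ▸ (squeeze_zero' ?_ ?_ tendsto_exp_neg_sq_atTop).sub
      tendsto_gaussianTail_atTop
    · filter_upwards [eventually_ge_atTop 0] with y hy
      positivity
    · filter_upwards [eventually_ge_atTop 1] with y hy
      rw [div_le_iff₀ (by linarith)]
      nlinarith [exp_pos (-y ^ 2)]
  have := pos_of_hasDerivAt_neg_of_tendsto_zero hg
    (fun y (hy : 0 < y) => neg_neg_of_pos (by positivity)) hlim hx
  exact sub_pos.1 this

lemma hasDerivAt_Qf (x : ℝ) :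
    HasDerivAt Qf (2 * exp (x ^ 2) * ((2 * x ^ 2 + 1) * gaussianTail x - x * exp (-x ^ 2))) x := by
  rw [funext Qf_eq_gaussianTail]
  refine ((((hasDerivAt_id x).const_mul 2).mul (hasDerivAt_pow 2 x).exp).mul
    (hasDerivAt_gaussianTail x)).congr_deriv ?_
  simp only [id, Pi.mul_apply, exp_neg]
  field_simp
  ring

lemma Qf_lt_one {x : ℝ} (hx : 0 < x) : Qf x < 1 :=
  calc Qf x = 2 * x * exp (x ^ 2) * gaussianTail x := Qf_eq_gaussianTail x
    _ < 2 * x * exp (x ^ 2) * (exp (-x ^ 2) / (2 * x)) := by gcongr; exact gaussianTail_lt_div hx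
    _ = 1 := by rw [exp_neg]; field_simp

lemma one_sub_inv_lt_Qf {x : ℝ} (hx : 0 < x) : 1 - (2 * x ^ 2 + 1)⁻¹ < Qf x :=
  calc 1 - (2 * x ^ 2 + 1)⁻¹ = 2 * x * exp (x ^ 2) * (x * exp (-x ^ 2) / (2 * x ^ 2 + 1)) := by
        rw [exp_neg]; field_simp; ring
    _ < 2 * x * exp (x ^ 2) * gaussianTail x := by gcongr; exact div_lt_gaussianTail x
    _ = Qf x := (Qf_eq_gaussianTail x).symm

/-- `Q` is strictly increasing on `(0,∞)`, with `Q(x) → 0` as `x → 0⁺`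
and `Q(x) → 1` as `x → +∞`. -/
theorem Qf_strictMonoOn_limits :
    StrictMonoOn Qf (Set.Ioi (0 : ℝ)) ∧
    Tendsto Qf (nhdsWithin 0 (Set.Ioi 0)) (nhds 0) ∧
    Tendsto Qf atTop (nhds 1) := by
  refine ⟨?_, ?_, ?_⟩
  · refine strictMonoOn_of_hasDerivWithinAt_pos (convex_Ioi 0)
      (fun x _ => (hasDerivAt_Qf x).continuousAt.continuousWithinAt)
      (fun x _ => (hasDerivAt_Qf x).hasDerivWithinAt) fun x _ => ?_
    have hlower := div_lt_gaussianTail x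
    rw [div_lt_iff₀' (by positivity)] at hlower
    exact mul_pos (by positivity) (sub_pos.2 hlower)
  · have hQ0 : Qf 0 = 0 := by simp [Qf]
    have := (hasDerivAt_Qf 0).continuousAt.tendsto.mono_left (nhdsWithin_le_nhds (s := Ioi 0))
    rwa [hQ0] at this
  · have hinv : Tendsto (fun x : ℝ => (2 * x ^ 2 + 1)⁻¹) atTop (𝓝 0) :=
      tendsto_inv_atTop_zero.comp <| tendsto_atTop_add_const_right _ _ <|
        (tendsto_pow_atTop two_ne_zero).const_mul_atTop two_pos
    refine tendsto_of_tendsto_of_tendsto_of_le_of_le' ((sub_zero (1:ℝ)) ▸ hinv.const_sub 1)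
      tendsto_const_nhds ?_ ?_
    · filter_upwards [eventually_gt_atTop 0] with x hx
      exact (one_sub_inv_lt_Qf hx).le
    · filter_upwards [eventually_gt_atTop 0] with x hx
      exact (Qf_lt_one hx).le
end

section
/- Let γ, ρ, α_s, α_l, k_s, k_l, q₀ be positive real constants, T₀ a real constant, and λ > 0. Define T_k = F(λ) = T₀ + (γρα_l/k_l) Q((√α_s/√α_l)λ) − (q₀/k_l)√(α_l π) e^{−λ²} F₁((√α_s/√α_l)λ) and T₁ = T_k − (q₀/k_s)√(π α_s) erf(λ). Then G(λ) = T_k, where G(x) = [γρα_sα_l Q₁(x) Q((√α_s/√α_l)x) + T₁ k_s α_l Q((√α_s/√α_l)x) + T₀ k_l α_s Q₁(x)] / [k_s α_l Q((√α_s/√α_l)x) + k_l α_s Q₁(x)]. -/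
/-!
Multiplying out the denominator, `G(λ) = T_k` says
`γρα_sα_l Q₁ Q + (T₁ − T_k) k_s α_l Q + (T₀ − T_k) k_l α_s Q₁ = 0`.
Substituting `T₁ − T_k` and `T_k − T₀`, the `γρ` terms cancel outright, and the `q₀` terms cancel
by the identity `erf(x) Q(cx) = c e^{−x²} F₁(cx) Q₁(x)`, where `e^{−x²}` undoes the factor
`e^{x²}` of `Q₁`. The denominator is positive because `erf > 0` and `erfc ≥ 0` on `(0, ∞)`.
-/

open Real Filter Set

/-- `Q₁(x) = √π · x · e^{x²} · erf(x)`. -/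
noncomputable def Q1f (x : ℝ) : ℝ := Real.sqrt π * x * Real.exp (x ^ 2) * erf x

/-- `F₁(x) = erfc(x) · e^{x²}`. -/
noncomputable def F1f (x : ℝ) : ℝ := erfc x * Real.exp (x ^ 2)

/-- `F(x) = T₀ + (γρα_l/k_l)·Q((√α_s/√α_l)x) − (q₀/k_l)·√(α_l π)·e^{−x²}·F₁((√α_s/√α_l)x)`. -/
noncomputable def Ff (γ ρ αs αl kl q₀ T₀ : ℝ) (x : ℝ) : ℝ :=
  T₀ + (γ * ρ * αl / kl) * Qf ((Real.sqrt αs / Real.sqrt αl) * x)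
    - (q₀ / kl) * Real.sqrt (αl * π) * Real.exp (-x ^ 2)
        * F1f ((Real.sqrt αs / Real.sqrt αl) * x)

/-- The Rubinstein function `G` with fixed-face temperature `T₁`. -/
noncomputable def Gf (γ ρ αs αl ks kl T₀ T₁ : ℝ) (x : ℝ) : ℝ :=
  (γ * ρ * αs * αl * Q1f x * Qf ((Real.sqrt αs / Real.sqrt αl) * x)
      + T₁ * ks * αl * Qf ((Real.sqrt αs / Real.sqrt αl) * x)
      + T₀ * kl * αs * Q1f x)
    / (ks * αl * Qf ((Real.sqrt αs / Real.sqrt αl) * x) + kl * αs * Q1f x)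

lemma integral_exp_neg_sq_le (x : ℝ) :
    ∫ t in (0:ℝ)..x, Real.exp (-t ^ 2) ≤ Real.sqrt π / 2 := by
  rcases le_total x 0 with hx | hx
  · rw [intervalIntegral.integral_symm]
    have : 0 ≤ ∫ t in x..0, Real.exp (-t ^ 2) :=
      intervalIntegral.integral_nonneg hx fun t _ => (Real.exp_pos _).le
    linarith [Real.sqrt_nonneg π]
  · have hint : MeasureTheory.IntegrableOn (fun t : ℝ => Real.exp (-t ^ 2)) (Ioi 0) := by
      simpa using (integrable_exp_neg_mul_sq one_pos).integrableOn
    calc ∫ t in (0:ℝ)..x, Real.exp (-t ^ 2)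
        ≤ ∫ t in Ioi (0:ℝ), Real.exp (-t ^ 2) := by
          rw [intervalIntegral.integral_of_le hx]
          exact MeasureTheory.setIntegral_mono_set hint
            (.of_forall fun t => (Real.exp_pos _).le) Ioc_subset_Ioi_self.eventuallyLE
      _ = Real.sqrt π / 2 := by simpa using integral_gaussian_Ioi 1

lemma erf_le_one (x : ℝ) : erf x ≤ 1 := by
  have hπ : 0 < Real.sqrt π := Real.sqrt_pos.mpr Real.pi_pos
  rw [erf, div_mul_eq_mul_div, div_le_one hπ]
  linarith [integral_exp_neg_sq_le x]

lemma erfc_nonneg (x : ℝ) : 0 ≤ erfc x := sub_nonneg.mpr (erf_le_one x)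

lemma erf_pos {x : ℝ} (hx : 0 < x) : 0 < erf x := by
  have hcont : Continuous fun t : ℝ => Real.exp (-t ^ 2) := by fun_prop
  have hI : 0 < ∫ t in (0:ℝ)..x, Real.exp (-t ^ 2) :=
    intervalIntegral.intervalIntegral_pos_of_pos_on (hcont.intervalIntegrable 0 x)
      (fun t _ => Real.exp_pos _) hx
  have hπ : 0 < Real.sqrt π := Real.sqrt_pos.mpr Real.pi_pos
  exact mul_pos (by positivity) hI

lemma Qf_nonneg {x : ℝ} (hx : 0 ≤ x) : 0 ≤ Qf x := by
  have := erfc_nonneg x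
  unfold Qf
  positivity

lemma Q1f_pos {x : ℝ} (hx : 0 < x) : 0 < Q1f x := by
  have := erf_pos hx
  unfold Q1f
  positivity

lemma erf_mul_Qf_mul (c x : ℝ) :
    erf x * Qf (c * x) = c * (Real.exp (-x ^ 2) * F1f (c * x) * Q1f x) := by
  have hexp : Real.exp (-x ^ 2) * Real.exp (x ^ 2) = 1 := by
    rw [← Real.exp_add, neg_add_cancel, Real.exp_zero]
  unfold Qf F1f Q1f
  linear_combination
    (-(c * Real.sqrt π * x * erf x * Real.exp ((c * x) ^ 2) * erfc (c * x))) * hexp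

theorem G_eq_Tk_heat_flux_general (γ ρ αs αl ks kl q₀ T₀ lam : ℝ)
    (hαs : 0 < αs) (hαl : 0 < αl)
    (hks : 0 < ks) (hkl : 0 < kl) (hlam : 0 < lam) :
    Gf γ ρ αs αl ks kl T₀
        (Ff γ ρ αs αl kl q₀ T₀ lam - (q₀ / ks) * Real.sqrt (π * αs) * erf lam) lam
      = Ff γ ρ αs αl kl q₀ T₀ lam := by
  set y := Real.sqrt αs / Real.sqrt αl * lam with hy
  set Tk := Ff γ ρ αs αl kl q₀ T₀ lam with hTk_def
  have hD : 0 < ks * αl * Qf y + kl * αs * Q1f lam := by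
    have := Qf_nonneg (x := y) (by positivity)
    have := Q1f_pos hlam
    positivity
  have hTk : kl * (Tk - T₀) = γ * ρ * αl * Qf y
      - q₀ * Real.sqrt (αl * π) * Real.exp (-lam ^ 2) * F1f y := by
    rw [hTk_def, Ff, ← hy]
    field_simp
    ring
  have hT₁ : ks * (Tk - q₀ / ks * Real.sqrt (π * αs) * erf lam - Tk)
      = -(q₀ * Real.sqrt (π * αs) * erf lam) := by
    field_simp
    ring
  have hflux : αl * Real.sqrt (π * αs) * erf lam * Qf y
      = αs * Real.sqrt (αl * π) * (Real.exp (-lam ^ 2) * F1f y * Q1f lam) := by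
    have hsl : Real.sqrt αl ≠ 0 := (Real.sqrt_pos.mpr hαl).ne'
    rw [mul_assoc _ (erf lam), hy, erf_mul_Qf_mul, Real.sqrt_mul Real.pi_pos.le,
      Real.sqrt_mul hαl.le]
    field_simp
    rw [Real.sq_sqrt hαs.le, Real.sq_sqrt hαl.le]
    ring
  rw [Gf, ← hy, div_eq_iff hD.ne']
  linear_combination αl * Qf y * hT₁ - αs * Q1f lam * hTk - q₀ * hflux

/-- With `T_k = F(λ)` and `T₁ = T_k − (q₀/k_s)√(π α_s) erf(λ)`, one has `G(λ) = T_k`. -/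
theorem G_eq_Tk_heat_flux (γ ρ αs αl ks kl q₀ T₀ lam : ℝ)
    (hγ : 0 < γ) (hρ : 0 < ρ) (hαs : 0 < αs) (hαl : 0 < αl)
    (hks : 0 < ks) (hkl : 0 < kl) (hq₀ : 0 < q₀) (hlam : 0 < lam) :
    Gf γ ρ αs αl ks kl T₀
        (Ff γ ρ αs αl kl q₀ T₀ lam - (q₀ / ks) * Real.sqrt (π * αs) * erf lam) lam
      = Ff γ ρ αs αl kl q₀ T₀ lam :=
  G_eq_Tk_heat_flux_general γ ρ αs αl ks kl q₀ T₀ lam hαs hαl hks hkl hlam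
end

section
/- Let α_s, α_l, d_l, k_s, k_l, γ, ρ, q₀ be positive real constants, T₀ real, f_s, f_l the solidus and liquidus curves, and φ(x) = (f_s(x) − f_l(x))/(C₀ − f_l(x)). Suppose λ > 0 satisfies M(λ) = φ(F(λ)), where F(x) = T₀ + (γρα_l/k_l) Q((√α_s/√α_l)x) − (q₀/k_l)√(α_l π) e^{−x²} F₁((√α_s/√α_l)x) and M(x) = 1/Q((√α_s/√d_l)x). Set T_k = F(λ) and T₁ = T_k − (q₀/k_s)√(π α_s) erf(λ). Then the pair (λ, T_k) satisfies the Rubinstein system: G(λ) = T_k and M(λ) = φ(T_k), where G(x) = [γρα_sα_l Q₁(x) Q((√α_s/√α_l)x) + T₁ k_s α_l Q((√α_s/√α_l)x) + T₀ k_l α_s Q₁(x)] / [k_s α_l Q((√α_s/√α_l)x) + k_l α_s Q₁(x)]. -/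
open Real Filter Set

/-- `M(x) = 1/Q((√α_s/√d_l)x)`. -/
noncomputable def Mf (αs dl : ℝ) (x : ℝ) : ℝ :=
  1 / Qf ((Real.sqrt αs / Real.sqrt dl) * x)

/-- `φ(x) = (f_s(x) − f_l(x))/(C₀ − f_l(x))`. -/
noncomputable def phi (fs fl : ℝ → ℝ) (C₀ : ℝ) (x : ℝ) : ℝ :=
  (fs x - fl x) / (C₀ - fl x)

open MeasureTheory in
lemma gauss_integrable : MeasureTheory.Integrable (fun t : ℝ => Real.exp (-t ^ 2)) := by
  simpa using integrable_exp_neg_mul_sq one_pos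

open MeasureTheory in
lemma gauss_int_lt (x : ℝ) : (∫ t in (0:ℝ)..x, Real.exp (-t ^ 2)) < Real.sqrt π / 2 := by
  have hg : (∫ t in Ioi (0:ℝ), Real.exp (-t ^ 2)) = Real.sqrt π / 2 := by
    simpa using integral_gaussian_Ioi 1
  rcases le_or_gt x 0 with hx | hx
  · have h1 : (∫ t in (0:ℝ)..x, Real.exp (-t ^ 2)) ≤ 0 := by
      rw [intervalIntegral.integral_symm, neg_nonpos]
      exact intervalIntegral.integral_nonneg hx (fun t _ => (Real.exp_pos _).le)
    have : 0 < Real.sqrt π / 2 := by positivity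
    linarith
  · rw [intervalIntegral.integral_of_le hx.le]
    have hsplit : (∫ t in Ioi (0:ℝ), Real.exp (-t ^ 2))
        = (∫ t in Ioc (0:ℝ) x, Real.exp (-t ^ 2)) + (∫ t in Ioi x, Real.exp (-t ^ 2)) := by
      rw [← Ioc_union_Ioi_eq_Ioi hx.le,
        setIntegral_union Ioc_disjoint_Ioi_same measurableSet_Ioi
          gauss_integrable.integrableOn gauss_integrable.integrableOn]
    have htail : 0 < ∫ t in Ioi x, Real.exp (-t ^ 2) := by
      rw [setIntegral_pos_iff_support_of_nonneg_ae
        (Eventually.of_forall fun t => (Real.exp_pos _).le) gauss_integrable.integrableOn]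
      have : (Function.support fun t : ℝ => Real.exp (-t ^ 2)) = univ := by
        ext t; simp [Function.mem_support, (Real.exp_pos _).ne']
      rw [this, univ_inter, Real.volume_Ioi]
      simp
    linarith [hsplit, hg]

lemma erf_lt_one (x : ℝ) : erf x < 1 := by
  have h : erf x < (2 / Real.sqrt π) * (Real.sqrt π / 2) := by
    unfold erf
    exact mul_lt_mul_of_pos_left (gauss_int_lt x) (by positivity)
  have hπ : (0:ℝ) < Real.sqrt π := Real.sqrt_pos.mpr Real.pi_pos
  have h1 : (2 / Real.sqrt π) * (Real.sqrt π / 2) = 1 := by field_simp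
  linarith

lemma Qf_pos {x : ℝ} (hx : 0 < x) : 0 < Qf x := by
  have h := erf_lt_one x
  unfold Qf erfc
  have hπ : (0:ℝ) < Real.sqrt π := Real.sqrt_pos.mpr Real.pi_pos
  have := Real.exp_pos (x ^ 2)
  have h1 : (0:ℝ) < 1 - erf x := by linarith
  positivity

/-- If `λ > 0` satisfies `M(λ) = φ(F(λ))`, then with `T_k = F(λ)` and
`T₁ = T_k − (q₀/k_s)√(π α_s) erf(λ)`, the pair `(λ, T_k)` satisfies the Rubinstein system
`G(λ) = T_k` and `M(λ) = φ(T_k)`. -/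
theorem rubinstein_system_heat_flux (γ ρ αs αl dl ks kl q₀ T₀ C₀ lam : ℝ)
    (fs fl : ℝ → ℝ)
    (hγ : 0 < γ) (hρ : 0 < ρ) (hαs : 0 < αs) (hαl : 0 < αl) (hdl : 0 < dl)
    (hks : 0 < ks) (hkl : 0 < kl) (hq₀ : 0 < q₀) (hlam : 0 < lam)
    (heq : Mf αs dl lam = phi fs fl C₀ (Ff γ ρ αs αl kl q₀ T₀ lam)) :
    Gf γ ρ αs αl ks kl T₀
        (Ff γ ρ αs αl kl q₀ T₀ lam - (q₀ / ks) * Real.sqrt (π * αs) * erf lam) lam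
      = Ff γ ρ αs αl kl q₀ T₀ lam ∧
    Mf αs dl lam = phi fs fl C₀ (Ff γ ρ αs αl kl q₀ T₀ lam) := by
  refine ⟨?_, heq⟩
  have hs : (0:ℝ) < Real.sqrt αs := Real.sqrt_pos.mpr hαs
  have hl : (0:ℝ) < Real.sqrt αl := Real.sqrt_pos.mpr hαl
  have hy : 0 < (Real.sqrt αs / Real.sqrt αl) * lam := by positivity
  have hQ : 0 < Qf ((Real.sqrt αs / Real.sqrt αl) * lam) := Qf_pos hy
  have hQ1 : 0 < Q1f lam := Q1f_pos hlam
  have hden : ks * αl * Qf ((Real.sqrt αs / Real.sqrt αl) * lam) + kl * αs * Q1f lam ≠ 0 := by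
    positivity
  rw [Gf, div_eq_iff hden]
  have hal : Real.sqrt (αl * π) = Real.sqrt αl * Real.sqrt π :=
    Real.sqrt_mul hαl.le π
  have has : Real.sqrt (π * αs) = Real.sqrt π * Real.sqrt αs :=
    Real.sqrt_mul Real.pi_pos.le αs
  have hs2 : Real.sqrt αs * Real.sqrt αs = αs := Real.mul_self_sqrt hαs.le
  have hl2 : Real.sqrt αl * Real.sqrt αl = αl := Real.mul_self_sqrt hαl.le
  rw [Ff, Q1f, F1f, Qf, Real.exp_neg, hal, has]
  have hE1 : Real.exp (lam ^ 2) ≠ 0 := (Real.exp_pos _).ne'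
  set p := Real.sqrt π
  set sa := Real.sqrt αs
  set sl := Real.sqrt αl
  set E := erf lam
  set Ec := erfc (sa / sl * lam)
  set a := Real.exp (lam ^ 2)
  set b := Real.exp ((sa / sl * lam) ^ 2)
  rw [← hs2, ← hl2]
  field_simp
  ring
end

section
/- Let h₀, k_s, k_l, α_s, α_l be positive real constants. The function F₂ : (0,∞) → ℝ defined by F₂(x) = h₀ k_s √(π α_l) e^{−x²} F₁((√α_s/√α_l)x) / (k_l (k_s + h₀√(π α_s) erf(x))) is strictly decreasing on (0,∞), with F₂(x) → (h₀/k_l)√(α_l π) as x → 0⁺ and F₂(x) → 0 as x → +∞. -/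
open Real Filter Set

/-- `F₂(x) = h₀ k_s √(π α_l) e^{−x²} F₁((√α_s/√α_l)x) / (k_l(k_s + h₀√(π α_s) erf(x)))`. -/
noncomputable def F2f (h₀ ks kl αs αl : ℝ) (x : ℝ) : ℝ :=
  h₀ * ks * Real.sqrt (π * αl) * Real.exp (-x ^ 2)
      * F1f ((Real.sqrt αs / Real.sqrt αl) * x)
    / (kl * (ks + h₀ * Real.sqrt (π * αs) * erf x))

/-!
Write `F₂(x) = A e^{-x²} F₁(c x) / (k_l (k_s + B erf x))` with `A, B > 0` and
`c = √α_s / √α_l`. The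
denominator is positive and increasing on `[0, ∞)`, so it suffices that
`N(x) = e^{-x²} F₁(c x)` strictly decreases there. Since `F₁' = 2 y F₁ − 2/√π`,
`N'(x) = e^{-x²} (2x(c² − 1) F₁(c x) − 2c/√π)`, and
`2x(c² − 1) F₁(c x) < 2c · (c x) F₁(c x) ≤ 2c/√π` by the Mills-ratio bound `y F₁(y) ≤ 1/√π`,
which comes from `∫_y^∞ e^{-t²} dt ≤ ∫_y^∞ (t/y) e^{-t²} dt = e^{-y²}/(2y)`. The same bound
gives `F₁(y) → 0` as `y → ∞`, hence `F₂ → 0`; at `0⁺`, `F₂` is continuous with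
`F₁(0) = 1` and `erf 0 = 0`.
-/

open MeasureTheory Topology

lemma integrable_mul_exp_neg_sq : Integrable fun t : ℝ => t * exp (-t ^ 2) := by
  simpa using integrable_mul_exp_neg_mul_sq one_pos

lemma hasDerivAt_erf (x : ℝ) : HasDerivAt erf (2 / √π * exp (-x ^ 2)) x :=
  (intervalIntegral.integral_hasDerivAt_right integrable_exp_neg_sq.intervalIntegrable
    (Continuous.stronglyMeasurableAtFilter (by fun_prop) _ _)
    (by fun_prop)).const_mul (2 / √π)

@[fun_prop]
lemma continuous_erf : Continuous erf :=
  continuous_iff_continuousAt.2 fun x => (hasDerivAt_erf x).continuousAt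

@[simp]
lemma erf_zero : erf 0 = 0 := by simp [erf]

lemma erf_strictMono : StrictMono erf :=
  strictMono_of_deriv_pos fun x => by rw [(hasDerivAt_erf x).deriv]; positivity

lemma erf_nonneg {x : ℝ} (hx : 0 ≤ x) : 0 ≤ erf x :=
  erf_zero ▸ erf_strictMono.monotone hx

lemma erfc_eq_integral_Ioi (y : ℝ) : erfc y = 2 / √π * ∫ t in Ioi y, exp (-t ^ 2) := by
  have hsplit := intervalIntegral.integral_interval_add_Ioi (a := 0) (b := y)
    integrable_exp_neg_sq.integrableOn integrable_exp_neg_sq.integrableOn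
  have hhalf : ∫ t in Ioi (0 : ℝ), exp (-t ^ 2) = √π / 2 := by
    simpa using integral_gaussian_Ioi 1
  rw [hhalf] at hsplit
  have hπ : √π ≠ 0 := (sqrt_pos.2 pi_pos).ne'
  rw [erfc, erf, ← sub_eq_of_eq_add' hsplit.symm]
  field_simp

lemma integral_Ioi_exp_neg_sq_pos (y : ℝ) : 0 < ∫ t in Ioi y, exp (-t ^ 2) := by
  rw [setIntegral_pos_iff_support_of_nonneg_ae
    (Eventually.of_forall fun t => (exp_pos _).le) integrable_exp_neg_sq.integrableOn]
  simp [Function.support, (exp_pos _).ne']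

lemma integral_Ioi_mul_exp_neg_sq (y : ℝ) :
    ∫ t in Ioi y, t * exp (-t ^ 2) = exp (-y ^ 2) / 2 := by
  have hderiv (t : ℝ) : HasDerivAt (fun t => -exp (-t ^ 2) / 2) (t * exp (-t ^ 2)) t := by
    refine ((hasDerivAt_pow 2 t).fun_neg.exp.fun_neg.div_const 2).congr_deriv ?_
    push_cast
    ring
  have hlim : Tendsto (fun t : ℝ => -exp (-t ^ 2) / 2) atTop (𝓝 0) := by
    simpa using tendsto_exp_neg_sq_atTop.neg.div_const 2
  rw [integral_Ioi_of_hasDerivAt_of_tendsto' (fun t _ => hderiv t)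
    integrable_mul_exp_neg_sq.integrableOn hlim]
  ring

lemma integral_Ioi_exp_neg_sq_le {y : ℝ} (hy : 0 < y) :
    ∫ t in Ioi y, exp (-t ^ 2) ≤ exp (-y ^ 2) / (2 * y) :=
  calc ∫ t in Ioi y, exp (-t ^ 2)
      ≤ ∫ t in Ioi y, y⁻¹ * (t * exp (-t ^ 2)) := by
        refine setIntegral_mono_on integrable_exp_neg_sq.integrableOn
          (integrable_mul_exp_neg_sq.const_mul _).integrableOn measurableSet_Ioi fun t ht => ?_
        rw [← mul_assoc, ← div_eq_inv_mul]
        exact le_mul_of_one_le_left (exp_pos _).le ((one_le_div hy).2 (le_of_lt ht))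
    _ = exp (-y ^ 2) / (2 * y) := by
        rw [integral_const_mul, integral_Ioi_mul_exp_neg_sq]
        field_simp

lemma erfc_pos (y : ℝ) : 0 < erfc y := by
  rw [erfc_eq_integral_Ioi]
  have := integral_Ioi_exp_neg_sq_pos y
  positivity

lemma F1f_pos (y : ℝ) : 0 < F1f y := mul_pos (erfc_pos y) (exp_pos _)

@[simp]
lemma F1f_zero : F1f 0 = 1 := by simp [F1f, erfc]

lemma mul_F1f_le {y : ℝ} (hy : 0 < y) : y * F1f y ≤ 1 / √π := by
  have hπ : 0 < √π := sqrt_pos.2 pi_pos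
  calc y * F1f y = 2 * y / √π * exp (y ^ 2) * ∫ t in Ioi y, exp (-t ^ 2) := by
        rw [F1f, erfc_eq_integral_Ioi]
        ring
    _ ≤ 2 * y / √π * exp (y ^ 2) * (exp (-y ^ 2) / (2 * y)) := by
        gcongr
        exact integral_Ioi_exp_neg_sq_le hy
    _ = 1 / √π := by
        rw [exp_neg]
        field_simp

lemma tendsto_F1f_atTop : Tendsto F1f atTop (𝓝 0) := by
  have hle {y : ℝ} (hy : 0 < y) : F1f y ≤ 1 / √π * y⁻¹ := by
    rw [← div_eq_mul_inv, le_div_iff₀ hy, mul_comm]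
    exact mul_F1f_le hy
  exact squeeze_zero' (Eventually.of_forall fun y => (F1f_pos y).le)
    ((eventually_gt_atTop 0).mono fun y => hle)
    (by simpa using tendsto_inv_atTop_zero.const_mul (1 / √π))

lemma hasDerivAt_F1f (y : ℝ) : HasDerivAt F1f (2 * y * F1f y - 2 / √π) y := by
  have herfc : HasDerivAt erfc (-(2 / √π * exp (-y ^ 2))) y := (hasDerivAt_erf y).const_sub 1
  refine (herfc.fun_mul (hasDerivAt_pow 2 y).exp).congr_deriv ?_
  simp only [F1f, exp_neg]
  field_simp
  ring

@[fun_prop]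
lemma continuous_F1f : Continuous F1f :=
  continuous_iff_continuousAt.2 fun y => (hasDerivAt_F1f y).continuousAt

/-- The numerator of `F₂`, up to a positive constant, with `c = √α_s / √α_l`. -/
noncomputable def dampedF1 (c x : ℝ) : ℝ := exp (-x ^ 2) * F1f (c * x)

lemma dampedF1_pos (c x : ℝ) : 0 < dampedF1 c x := mul_pos (exp_pos _) (F1f_pos _)

@[simp]
lemma dampedF1_zero (c : ℝ) : dampedF1 c 0 = 1 := by simp [dampedF1]

@[fun_prop]
lemma continuous_dampedF1 (c : ℝ) : Continuous (dampedF1 c) := by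
  unfold dampedF1
  fun_prop

lemma hasDerivAt_dampedF1 (c x : ℝ) :
    HasDerivAt (dampedF1 c)
      (exp (-x ^ 2) * (2 * x * (c ^ 2 - 1) * F1f (c * x) - 2 * c / √π)) x := by
  refine ((hasDerivAt_pow 2 x).fun_neg.exp.fun_mul
    ((hasDerivAt_F1f (c * x)).comp x ((hasDerivAt_id x).const_mul c))).congr_deriv ?_
  simp only [Function.comp_apply]
  push_cast
  ring

lemma dampedF1_strictAntiOn {c : ℝ} (hc : 0 < c) : StrictAntiOn (dampedF1 c) (Ici 0) := by
  refine strictAntiOn_of_deriv_neg (convex_Ici 0) (continuous_dampedF1 c).continuousOn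
    fun x hx => ?_
  replace hx : 0 < x := by rwa [interior_Ici] at hx
  have hcx : 0 < c * x := mul_pos hc hx
  have hslope : 2 * x * (c ^ 2 - 1) * F1f (c * x) < 2 * c / √π :=
    calc 2 * x * (c ^ 2 - 1) * F1f (c * x) < 2 * x * c ^ 2 * F1f (c * x) := by
          have := F1f_pos (c * x)
          gcongr
          linarith
      _ = 2 * c * (c * x * F1f (c * x)) := by ring
      _ ≤ 2 * c * (1 / √π) := by gcongr; exact mul_F1f_le hcx
      _ = 2 * c / √π := by ring
  rw [(hasDerivAt_dampedF1 c x).deriv]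
  exact mul_neg_of_pos_of_neg (exp_pos _) (by linarith)

lemma tendsto_dampedF1_atTop {c : ℝ} (hc : 0 < c) : Tendsto (dampedF1 c) atTop (𝓝 0) := by
  have := tendsto_exp_neg_sq_atTop.mul (tendsto_F1f_atTop.comp (tendsto_id.const_mul_atTop hc))
  rwa [mul_zero] at this

lemma StrictAntiOn.div_of_monotoneOn {α : Type*} [Preorder α] {f g : α → ℝ} {s : Set α}
    (hf : StrictAntiOn f s) (hg : MonotoneOn g s) (hf₀ : ∀ x ∈ s, 0 ≤ f x)
    (hg₀ : ∀ x ∈ s, 0 < g x) : StrictAntiOn (fun x => f x / g x) s :=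
  fun _ ha _ hb hab => div_lt_div₀ (hf ha hb hab) (hg ha hb hab.le) (hf₀ _ ha) (hg₀ _ ha)

lemma F2f_eq_dampedF1 (h₀ ks kl αs αl : ℝ) :
    F2f h₀ ks kl αs αl = fun x => h₀ * ks * √(π * αl) * dampedF1 (√αs / √αl) x
      / (kl * (ks + h₀ * √(π * αs) * erf x)) := by
  ext x
  simp only [F2f, dampedF1, mul_assoc]

/-- `F₂` is strictly decreasing on `(0,∞)`, with `F₂(x) → (h₀/k_l)√(α_l π)` as `x → 0⁺`
and `F₂(x) → 0` as `x → +∞`. -/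
theorem F2f_strictAntiOn_limits (h₀ ks kl αs αl : ℝ)
    (hh₀ : 0 < h₀) (hks : 0 < ks) (hkl : 0 < kl) (hαs : 0 < αs) (hαl : 0 < αl) :
    StrictAntiOn (F2f h₀ ks kl αs αl) (Set.Ioi (0 : ℝ)) ∧
    Tendsto (F2f h₀ ks kl αs αl) (nhdsWithin 0 (Set.Ioi 0))
      (nhds ((h₀ / kl) * Real.sqrt (αl * π))) ∧
    Tendsto (F2f h₀ ks kl αs αl) atTop (nhds 0) := by
  have hc : 0 < √αs / √αl := by positivity
  have hA : 0 < h₀ * ks * √(π * αl) := by positivity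
  have hnum (x : ℝ) : 0 < h₀ * ks * √(π * αl) * dampedF1 (√αs / √αl) x :=
    mul_pos hA (dampedF1_pos _ x)
  have hden {x : ℝ} (hx : 0 ≤ x) : kl * ks ≤ kl * (ks + h₀ * √(π * αs) * erf x) := by
    gcongr
    exact le_add_of_nonneg_right (mul_nonneg (by positivity) (erf_nonneg hx))
  have hden_pos {x : ℝ} (hx : 0 ≤ x) : 0 < kl * (ks + h₀ * √(π * αs) * erf x) :=
    (mul_pos hkl hks).trans_le (hden hx)
  rw [F2f_eq_dampedF1]
  refine ⟨?_, ?_, ?_⟩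
  · refine ((strictMono_mul_left_of_pos hA).comp_strictAntiOn
      ((dampedF1_strictAntiOn hc).mono Ioi_subset_Ici_self)).div_of_monotoneOn
      (fun x _ y _ hxy => ?_) (fun x _ => (hnum x).le) (fun x hx => hden_pos (le_of_lt hx))
    gcongr
    exact erf_strictMono.monotone hxy
  · have hcont : ContinuousAt (fun x => h₀ * ks * √(π * αl) * dampedF1 (√αs / √αl) x
        / (kl * (ks + h₀ * √(π * αs) * erf x))) 0 :=
      ContinuousAt.div (by fun_prop) (by fun_prop) (hden_pos le_rfl).ne'
    convert hcont.continuousWithinAt.tendsto using 2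
    simp only [dampedF1_zero, erf_zero, mul_zero, add_zero, mul_one, mul_comm αl π]
    field_simp
  · refine squeeze_zero' ((eventually_ge_atTop 0).mono fun x hx => ?_)
      ((eventually_ge_atTop 0).mono fun x hx => ?_)
      (by simpa using ((tendsto_dampedF1_atTop hc).const_mul
        (h₀ * ks * √(π * αl))).div_const (kl * ks))
    · exact div_nonneg (hnum x).le (hden_pos hx).le
    · exact div_le_div_of_nonneg_left (hnum x).le (mul_pos hkl hks) (hden hx)
end
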